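/- Let P = U Σ^{-2} Uᵀ with U ∈ ℝ^{E×k} orthonormal-column and Σ positive definite diagonal, and suppose H·Hᵀ·P = D·P + U·Uᵀ for a symmetric PSD D. Then ‖Hᵀ·P·H − I_M‖_F² = trace(D·P·D·P) + M − k, where H ∈ ℝ^{E×M} and I_M is the M×M identity. -/
import Mathlib


open Matrix

attribute [local instance] Matrix.frobeniusNormedAddCommGroup

lemma normsq_eq_trace {m n : ℕ} (A : Matrix (Fin m) (Fin n) ℝ) :
    ‖A‖ ^ 2 = (Aᵀ * A).trace := by
  rw [Matrix.frobenius_norm_def]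
  rw [← Real.rpow_natCast _ 2, ← Real.rpow_mul (by positivity)]
  norm_num
  rw [Matrix.trace, Finset.sum_comm]
  simp [Matrix.diag, Matrix.mul_apply, Real.norm_eq_abs, sq_abs, pow_two]

/-- Given `P = U Σ⁻² Uᵀ` with `U` orthonormal-column (`k ≤ M`) and the structural
identity `H Hᵀ P = D P + U Uᵀ` for a symmetric PSD `D`,
`‖Hᵀ P H − I_M‖_F² = trace (D P D P) + M − k`. -/
theorem frobSq_HtPH_sub_id {E M k : ℕ} (hkM : k ≤ M)
    (H : Matrix (Fin E) (Fin M) ℝ)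
    (U : Matrix (Fin E) (Fin k) ℝ) (σ : Fin k → ℝ)
    (D P : Matrix (Fin E) (Fin E) ℝ)
    (hU : Uᵀ * U = 1) (hσ : ∀ i, 0 < σ i)
    (hP : P = U * Matrix.diagonal (fun i => ((σ i) ^ 2)⁻¹) * Uᵀ)
    (hD : D.PosSemidef)
    (hkey : H * Hᵀ * P = D * P + U * Uᵀ) :
    ‖Hᵀ * P * H - 1‖ ^ 2 = (D * P * D * P).trace + (M : ℝ) - (k : ℝ) := by
  have hPt : Pᵀ = P := by
    subst hP
    rw [Matrix.transpose_mul, Matrix.transpose_mul, Matrix.transpose_transpose,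
      Matrix.diagonal_transpose, Matrix.mul_assoc]
  have hPUU : P * (U * Uᵀ) = P := by
    subst hP
    rw [Matrix.mul_assoc, Matrix.mul_assoc, ← Matrix.mul_assoc Uᵀ U Uᵀ, hU, Matrix.one_mul, ← Matrix.mul_assoc]
  have hUUk : (U * Uᵀ).trace = (k : ℝ) := by
    rw [Matrix.trace_mul_comm, hU, Matrix.trace_one]
    simp
  have hAt : (Hᵀ * P * H - 1)ᵀ = Hᵀ * P * H - 1 := by
    rw [Matrix.transpose_sub, Matrix.transpose_one, Matrix.transpose_mul,
      Matrix.transpose_mul, Matrix.transpose_transpose, hPt, Matrix.mul_assoc]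
  -- trace of A
  have t3 : (Hᵀ * P * H).trace = (D * P).trace + (k : ℝ) := by
    rw [Matrix.trace_mul_comm, ← Matrix.mul_assoc, hkey, Matrix.trace_add, hUUk]
  -- trace of A*A
  have t2 : ((Hᵀ * P * H) * (Hᵀ * P * H)).trace
      = (D * P * D * P).trace + 2 * (D * P).trace + (k : ℝ) := by
    have c1 : ((Hᵀ * P * H) * (Hᵀ * P * H)).trace
        = ((H * Hᵀ * P) * (H * Hᵀ * P)).trace := by
      rw [show (Hᵀ * P * H) * (Hᵀ * P * H) = (Hᵀ * P) * (H * (Hᵀ * (P * H))) by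
        simp [Matrix.mul_assoc], Matrix.trace_mul_comm]
      congr 1
      simp [Matrix.mul_assoc]
    rw [c1, hkey, Matrix.add_mul, Matrix.mul_add, Matrix.mul_add, Matrix.trace_add,
      Matrix.trace_add, Matrix.trace_add]
    have e1 : (D * P * (U * Uᵀ)).trace = (D * P).trace := by
      rw [Matrix.mul_assoc D P (U * Uᵀ), hPUU]
    have e2 : ((U * Uᵀ) * (D * P)).trace = (D * P).trace := by
      rw [Matrix.trace_mul_comm, Matrix.mul_assoc D P (U * Uᵀ), hPUU]
    have e3 : ((U * Uᵀ) * (U * Uᵀ)).trace = (k : ℝ) := by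
      rw [show (U * Uᵀ) * (U * Uᵀ) = U * ((Uᵀ * U) * Uᵀ) by simp [Matrix.mul_assoc],
        hU, Matrix.one_mul, hUUk]
    rw [e1, e2, e3, show D * P * (D * P) = D * P * D * P from by rw [← Matrix.mul_assoc]]
    ring
  rw [normsq_eq_trace, hAt, Matrix.sub_mul, Matrix.mul_sub, Matrix.mul_sub,
    Matrix.mul_one, Matrix.one_mul, Matrix.trace_sub, Matrix.trace_sub, Matrix.trace_sub,
    t2, t3]
  simp only [Matrix.one_mul, Matrix.trace_one, Fintype.card_fin]
  push_cast
  ring
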